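/- arXiv:1806.06683 — 2 statements merged into one kernel-verified Lean document; each statement's English description precedes it below -/
import Mathlib

section
/- Let {X_n}_{n∈ℕ₀} be a difference-bounded supermartingale (with a.s. difference bound c ∈ (0,∞)) adapted to a filtration {F_n}_{n∈ℕ₀} satisfying the LBCAD condition with parameter δ ∈ (0,∞). Let t ∈ (0,∞) satisfy e^{c·t} − (1 + c·t + (c·t)²/2) ≤ (δ²/4)·t². Then for every n it holds a.s. that X_n > 0 implies E[e^{−t·(X_{n+1} − X_n)} | F_n] ≥ 1 + (δ²/4)·t². -/
/-!
Write `Y = X (n+1) - X n` and `K = e^{ct} - (1 + ct + (ct)²/2)`. On `|y| ≤ c` one has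
`e^{-ty} ≥ 1 - ty + t²y²/2 - K`: the map `u ↦ e^u - u - u²/2` is monotone and
`cosh a ≥ 1 + a²/2`. Bounding `y² ≥ 2δ|y| - δ²` makes the right side affine in `y` and `|y|`,
so taking conditional expectations and using `E[Y | F_n] ≤ 0` and `E[|Y| | F_n] ≥ δ` gives
`E[e^{-tY} | F_n] ≥ 1 - K + δ²t²/2 ≥ 1 + δ²t²/4`.
-/

open MeasureTheory ProbabilityTheory Filter

namespace Real

lemma monotone_exp_sub_id_sub_sq_div_two : Monotone fun u : ℝ => exp u - u - u ^ 2 / 2 := by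
  refine monotone_of_deriv_nonneg (by fun_prop) fun x => ?_
  have hd : HasDerivAt (fun u : ℝ => exp u - u - u ^ 2 / 2) (exp x - 1 - x) x :=
    (((hasDerivAt_exp x).sub (hasDerivAt_id' x)).sub
      ((hasDerivAt_pow 2 x).div_const 2)).congr_deriv (by push_cast; ring)
  rw [hd.deriv]
  linarith [add_one_le_exp x]

lemma one_add_sq_div_two_le_cosh (x : ℝ) : 1 + x ^ 2 / 2 ≤ cosh x := by
  wlog hx : 0 ≤ x generalizing x
  · simpa using this (-x) (by linarith)
  have hsinh : x / 2 ≤ sinh (x / 2) := self_le_sinh_iff.2 (by positivity)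
  have hcosh : cosh x = 1 + 2 * sinh (x / 2) ^ 2 := by
    rw [show x = 2 * (x / 2) by ring, cosh_two_mul, cosh_sq]
    ring_nf
  nlinarith

lemma quadratic_sub_exp_remainder_le_exp {s a : ℝ} (hs : |s| ≤ a) :
    1 + s + s ^ 2 / 2 - (exp a - (1 + a + a ^ 2 / 2)) ≤ exp s := by
  have hmono := monotone_exp_sub_id_sub_sq_div_two (neg_le_of_abs_le hs)
  have hcosh := one_add_sq_div_two_le_cosh a
  rw [cosh_eq] at hcosh
  simp only at hmono
  nlinarith

lemma exp_neg_mul_ge_affine_abs {t c δ y : ℝ} (ht : 0 ≤ t) (hy : |y| ≤ c) :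
    1 - (exp (c * t) - (1 + c * t + (c * t) ^ 2 / 2)) - δ ^ 2 * t ^ 2 / 2
      + -t * y + δ * t ^ 2 * |y| ≤ exp (-t * y) := by
  have hty : |-t * y| ≤ c * t := by
    rw [abs_mul, abs_neg, abs_of_nonneg ht, mul_comm]
    exact mul_le_mul_of_nonneg_right hy ht
  have htaylor := quadratic_sub_exp_remainder_le_exp hty
  nlinarith [mul_nonneg (sq_nonneg t) (sq_nonneg (|y| - δ)), sq_abs y]

end Real

open Real

section

variable {Ω : Type*} {m m0 : MeasurableSpace Ω} {μ : Measure Ω}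

lemma integrable_exp_of_ae_le [IsFiniteMeasure μ] {f : Ω → ℝ} (hf : AEStronglyMeasurable f μ)
    {C : ℝ} (hC : ∀ᵐ ω ∂μ, f ω ≤ C) : Integrable (fun ω => exp (f ω)) μ := by
  refine (integrable_const (exp C)).mono' (continuous_exp.comp_aestronglyMeasurable hf) ?_
  filter_upwards [hC] with ω h
  rw [norm_of_nonneg (exp_pos _).le]
  exact exp_le_exp.2 h

lemma condExp_const_add_mul_add_mul [IsFiniteMeasure μ] (hm : m ≤ m0) {f g : Ω → ℝ}
    (hf : Integrable f μ) (hg : Integrable g μ) (a b d : ℝ) :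
    μ[fun ω => a + b * f ω + d * g ω | m]
      =ᵐ[μ] fun ω => a + b * μ[f | m] ω + d * μ[g | m] ω := by
  have hab : Integrable (fun ω => a + b * f ω) μ := (integrable_const a).add (hf.const_mul b)
  have hbf : μ[fun ω => b * f ω | m] =ᵐ[μ] fun ω => b * μ[f | m] ω := condExp_smul b f m
  have hdg : μ[fun ω => d * g ω | m] =ᵐ[μ] fun ω => d * μ[g | m] ω := condExp_smul d g m
  filter_upwards [condExp_add hab (hg.const_mul d) m,
    condExp_add (integrable_const a) (hf.const_mul b) m, hbf, hdg] with ω hsum hab' hbf hdg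
  simp only [Pi.add_apply] at hsum hab'
  change μ[(fun ω => a + b * f ω) + fun ω => d * g ω | m] ω = _
  rw [hsum]
  change μ[(fun _ => a) + fun ω => b * f ω | m] ω + _ = _
  rw [hab', condExp_const hm, hbf, hdg]

lemma MeasureTheory.Supermartingale.condExp_sub_nonpos [IsFiniteMeasure μ]
    {ℱ : Filtration ℕ m0} {X : ℕ → Ω → ℝ} (hX : Supermartingale X ℱ μ) {i j : ℕ} (hij : i ≤ j) :
    μ[X j - X i | ℱ i] ≤ᵐ[μ] 0 := by
  have hXi : μ[X i | ℱ i] = X i :=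
    condExp_of_stronglyMeasurable (ℱ.le i) (hX.stronglyAdapted i) (hX.integrable i)
  filter_upwards [condExp_sub (hX.integrable j) (hX.integrable i) (ℱ i), hX.condExp_ae_le hij]
    with ω hsub hle
  rw [hsub, Pi.sub_apply, hXi, Pi.zero_apply]
  linarith

end

theorem conditional_exponential_moment_lower_bound_general
    {Ω : Type*} {m0 : MeasurableSpace Ω} {μ : Measure Ω} [IsProbabilityMeasure μ]
    (ℱ : Filtration ℕ m0) (X : ℕ → Ω → ℝ)
    (hsup : Supermartingale X ℱ μ)
    (c : ℝ)
    (hdiff : ∀ n : ℕ, ∀ᵐ ω ∂μ, |X (n + 1) ω - X n ω| ≤ c)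
    (δ : ℝ) (hδ : 0 < δ)
    (hLBCAD : ∀ n : ℕ, ∀ᵐ ω ∂μ,
      0 < X n ω → δ ≤ (μ[fun ω' => |X (n + 1) ω' - X n ω'| | ℱ n]) ω)
    (t : ℝ) (ht : 0 < t)
    (ht' : Real.exp (c * t) - (1 + c * t + (c * t) ^ 2 / 2) ≤ δ ^ 2 / 4 * t ^ 2) :
    ∀ n : ℕ, ∀ᵐ ω ∂μ, 0 < X n ω →
      1 + δ ^ 2 / 4 * t ^ 2 ≤
        (μ[fun ω' => Real.exp (-t * (X (n + 1) ω' - X n ω')) | ℱ n]) ω := by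
  intro n
  set Y : Ω → ℝ := X (n + 1) - X n
  set K := exp (c * t) - (1 + c * t + (c * t) ^ 2 / 2)
  have hY : Integrable Y μ := (hsup.integrable (n + 1)).sub (hsup.integrable n)
  have hlower : μ[fun ω => (1 - K - δ ^ 2 * t ^ 2 / 2) + -t * Y ω + δ * t ^ 2 * |Y ω| | ℱ n]
      ≤ᵐ[μ] μ[fun ω => exp (-t * Y ω) | ℱ n] := by
    refine condExp_mono (((integrable_const _).add (hY.const_mul _)).add (hY.abs.const_mul _))
      (integrable_exp_of_ae_le (hY.1.const_mul (-t)) (C := t * c) ?_) ?_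
    · filter_upwards [hdiff n] with ω h
      calc -t * Y ω = t * -Y ω := by ring
        _ ≤ t * c := mul_le_mul_of_nonneg_left (neg_le.1 (abs_le.1 h).1) ht.le
    · filter_upwards [hdiff n] with ω h
      exact exp_neg_mul_ge_affine_abs ht.le h
  filter_upwards [hlower, condExp_const_add_mul_add_mul (ℱ.le n) hY hY.abs _ _ _,
    hsup.condExp_sub_nonpos n.le_succ, hLBCAD n]
    with ω hle hsplit hdrift habs hpos
  change μ[Y | ℱ n] ω ≤ 0 at hdrift
  have hδm : δ ≤ μ[fun ω => |Y ω| | ℱ n] ω := habs hpos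
  change _ ≤ μ[fun ω => exp (-t * Y ω) | ℱ n] ω
  rw [hsplit] at hle
  linarith [mul_le_mul_of_nonneg_left hδm (by positivity : 0 ≤ δ * t ^ 2),
    mul_nonneg ht.le (neg_nonneg.2 hdrift)]

/-- **Lower bound on the conditional exponential moment.**
If `{X_n}` is a difference-bounded supermartingale (bound `c`) with the LBCAD
condition (parameter `δ`) and `t > 0` satisfies
`e^{c·t} − (1 + c·t + (c·t)²/2) ≤ (δ²/4)·t²`, then a.s.
`X_n > 0` implies `E[e^{−t·(X_{n+1} − X_n)} | F_n] ≥ 1 + (δ²/4)·t²`. -/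
theorem conditional_exponential_moment_lower_bound
    {Ω : Type*} {m0 : MeasurableSpace Ω} {μ : Measure Ω} [IsProbabilityMeasure μ]
    (ℱ : Filtration ℕ m0) (X : ℕ → Ω → ℝ)
    (hsup : Supermartingale X ℱ μ)
    (c : ℝ) (hc : 0 < c)
    (hdiff : ∀ n : ℕ, ∀ᵐ ω ∂μ, |X (n + 1) ω - X n ω| ≤ c)
    (δ : ℝ) (hδ : 0 < δ)
    (hLBCAD : ∀ n : ℕ, ∀ᵐ ω ∂μ,
      0 < X n ω → δ ≤ (μ[fun ω' => |X (n + 1) ω' - X n ω'| | ℱ n]) ω)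
    (t : ℝ) (ht : 0 < t)
    (ht' : Real.exp (c * t) - (1 + c * t + (c * t) ^ 2 / 2) ≤ δ ^ 2 / 4 * t ^ 2) :
    ∀ n : ℕ, ∀ᵐ ω ∂μ, 0 < X n ω →
      1 + δ ^ 2 / 4 * t ^ 2 ≤
        (μ[fun ω' => Real.exp (-t * (X (n + 1) ω' - X n ω')) | ℱ n]) ω :=
  conditional_exponential_moment_lower_bound_general ℱ X hsup c hdiff δ hδ hLBCAD t ht ht'
end

section
/- Let {X_n}_{n∈ℕ₀} be a nonnegative supermartingale adapted to a filtration {F_n}_{n∈ℕ₀} satisfying the LBCAD condition with parameter δ ∈ (0,∞), and let M > 0. Define X'_n := min(X_n, M) for all n. Then {X'_n}_{n∈ℕ₀} is a supermartingale adapted to {F_n}, and for every n it holds a.s. that E[|X'_{n+1} − X'_n| | F_n] ≥ 1_{0 < X'_n < M} · δ/2. -/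
/-!
Truncation at `M` is the infimum with the constant martingale `M`, hence a supermartingale. For
the second claim write `D = X (n + 1) - X n`. On `{X n ≤ M}` the truncated increment is at least
`D⁻` in absolute value, because only upward moves are cut off. Since `D⁻ = (|D| - D) / 2` and
`E[D | ℱ n] ≤ 0`, we get `E[D⁻ | ℱ n] ≥ E[|D| | ℱ n] / 2 ≥ δ / 2` wherever `X n > 0`.
-/

open MeasureTheory ProbabilityTheory Filter

namespace MeasureTheory

variable {Ω ι E : Type*} {m0 : MeasurableSpace Ω} {μ : Measure Ω}

protected theorem Supermartingale.inf [Preorder ι] [NormedAddCommGroup E] [NormedSpace ℝ E]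
    [CompleteSpace E] [Lattice E] [ContinuousSup E] [HasSolidNorm E] [IsOrderedAddMonoid E]
    [IsOrderedModule ℝ E] {ℱ : Filtration ι m0} {f g : ι → Ω → E}
    (hf : Supermartingale f ℱ μ) (hg : Supermartingale g ℱ μ) :
    Supermartingale (f ⊓ g) ℱ μ := by
  simpa only [neg_sup, neg_neg] using (hf.neg.sup hg.neg).neg

theorem Supermartingale.condExp_sub_nonpos_s7 [Preorder ι] {ℱ : Filtration ι m0}
    {f : ι → Ω → ℝ} (hf : Supermartingale f ℱ μ) {i j : ι} (hij : i ≤ j) :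
    μ[f j - f i | ℱ i] ≤ᵐ[μ] 0 := by
  have hsub : (-f) j - (-f) i = -(f j - f i) := by simp only [Pi.neg_apply]; abel
  filter_upwards [hf.neg.condExp_sub_nonneg hij, condExp_neg (f j - f i) (ℱ i)]
    with ω h h'
  rw [hsub, h'] at h
  simpa using h

theorem half_condExp_abs_le_condExp_negPart {m : MeasurableSpace Ω} {f : Ω → ℝ}
    (hf : Integrable f μ) (hf_nonpos : μ[f | m] ≤ᵐ[μ] 0) :
    ∀ᵐ ω ∂μ, μ[fun ω => |f ω| | m] ω / 2 ≤ μ[fun ω => (f ω)⁻ | m] ω := by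
  have hneg : Integrable (fun ω => (f ω)⁻) μ := hf.neg.sup (integrable_zero _ _ _)
  have htwice : (fun ω => (f ω)⁻) + (fun ω => (f ω)⁻) = (fun ω => |f ω|) - f := by
    ext ω
    simp only [Pi.add_apply, Pi.sub_apply]
    linarith [posPart_add_negPart (f ω), posPart_sub_negPart (f ω)]
  have hlin := condExp_add hneg hneg m
  rw [htwice] at hlin
  filter_upwards [hlin, condExp_sub hf.abs hf m, hf_nonpos] with ω hlin hsub hω
  simp only [Pi.add_apply, Pi.sub_apply, Pi.zero_apply] at hlin hsub hω
  linarith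

theorem negPart_sub_le_abs_min_sub_min {a b M : ℝ} (ha : a ≤ M) :
    (b - a)⁻ ≤ |min b M - min a M| := by
  rw [min_eq_left ha]
  rcases le_total a b with hab | hba
  · rw [(negPart_eq_zero (a := b - a)).mpr (sub_nonneg.mpr hab)]
    exact abs_nonneg _
  · rw [min_eq_left (hba.trans ha),
      (negPart_eq_neg (a := b - a)).mpr (sub_nonpos.mpr hba), neg_sub, abs_sub_comm]
    exact le_abs_self (a - b)

theorem Supermartingale.half_condExp_abs_sub_le_condExp_abs_sub_min [IsFiniteMeasure μ]
    {ℱ : Filtration ℕ m0} {X : ℕ → Ω → ℝ} (hX : Supermartingale X ℱ μ) (M : ℝ) (n : ℕ) :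
    ∀ᵐ ω ∂μ, X n ω ≤ M → μ[fun ω => |X (n + 1) ω - X n ω| | ℱ n] ω / 2 ≤
      μ[fun ω => |min (X (n + 1) ω) M - min (X n ω) M| | ℱ n] ω := by
  set A := {ω | X n ω ≤ M}
  have hA : MeasurableSet[ℱ n] A :=
    measurableSet_le (hX.stronglyAdapted n).measurable measurable_const
  have hinc : Integrable (fun ω => X (n + 1) ω - X n ω) μ :=
    (hX.integrable _).sub (hX.integrable _)
  have hneg : Integrable (fun ω => (X (n + 1) ω - X n ω)⁻) μ :=
    hinc.neg.sup (integrable_zero _ _ _)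
  have hmin : Integrable (fun ω => |min (X (n + 1) ω) M - min (X n ω) M|) μ :=
    (((hX.integrable _).inf (integrable_const M)).sub
      ((hX.integrable _).inf (integrable_const M))).abs
  have hle : A.indicator (fun ω => (X (n + 1) ω - X n ω)⁻) ≤
      fun ω => |min (X (n + 1) ω) M - min (X n ω) M| := fun ω =>
    Set.indicator_apply_le' negPart_sub_le_abs_min_sub_min fun _ => abs_nonneg _
  filter_upwards [condExp_mono (hneg.indicator (ℱ.le n A hA)) hmin (ae_of_all _ hle),
    condExp_indicator hneg hA,
    half_condExp_abs_le_condExp_negPart hinc (hX.condExp_sub_nonpos_s7 n.le_succ)]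
    with ω hmono hind hhalf hω
  rw [hind, Set.indicator_of_mem (show ω ∈ A from hω)] at hmono
  exact hhalf.trans hmono

end MeasureTheory

theorem truncated_supermartingale_LBCAD_general
    {Ω : Type*} {m0 : MeasurableSpace Ω} {μ : Measure Ω} [IsProbabilityMeasure μ]
    (ℱ : Filtration ℕ m0) (X : ℕ → Ω → ℝ)
    (hsup : Supermartingale X ℱ μ)
    (δ : ℝ)
    (hLBCAD : ∀ n : ℕ, ∀ᵐ ω ∂μ,
      0 < X n ω → δ ≤ (μ[fun ω' => |X (n + 1) ω' - X n ω'| | ℱ n]) ω)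
    (M : ℝ) :
    Supermartingale (fun n ω => min (X n ω) M) ℱ μ ∧
      ∀ n : ℕ, ∀ᵐ ω ∂μ,
        Set.indicator {ω' | 0 < min (X n ω') M ∧ min (X n ω') M < M}
            (fun _ => δ / 2) ω ≤
          (μ[fun ω' => |min (X (n + 1) ω') M - min (X n ω') M| | ℱ n]) ω := by
  refine ⟨hsup.inf (martingale_const ℱ μ M).supermartingale, fun n => ?_⟩
  filter_upwards [hLBCAD n, hsup.half_condExp_abs_sub_le_condExp_abs_sub_min M n,
    condExp_nonneg (ae_of_all μ fun ω => abs_nonneg (min (X (n + 1) ω) M - min (X n ω) M))]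
    with ω hLB hhalf hcond_nonneg
  refine Set.indicator_apply_le' (fun hω => ?_) fun _ => hcond_nonneg
  obtain ⟨⟨hpos, -⟩, hltM⟩ : (0 < X n ω ∧ 0 < M) ∧ X n ω < M := by simpa using hω
  linarith [hLB hpos, hhalf hltM.le]

/-- **Truncation `X'_n := min(X_n, M)` of a nonnegative LBCAD supermartingale.**
The truncated process is again a supermartingale and a.s.
`E[|X'_{n+1} − X'_n| | F_n] ≥ 1_{0 < X'_n < M} · δ/2`. -/
theorem truncated_supermartingale_LBCAD
    {Ω : Type*} {m0 : MeasurableSpace Ω} {μ : Measure Ω} [IsProbabilityMeasure μ]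
    (ℱ : Filtration ℕ m0) (X : ℕ → Ω → ℝ)
    (hsup : Supermartingale X ℱ μ)
    (hnonneg : ∀ n ω, 0 ≤ X n ω)
    (δ : ℝ) (hδ : 0 < δ)
    (hLBCAD : ∀ n : ℕ, ∀ᵐ ω ∂μ,
      0 < X n ω → δ ≤ (μ[fun ω' => |X (n + 1) ω' - X n ω'| | ℱ n]) ω)
    (M : ℝ) (hM : 0 < M) :
    Supermartingale (fun n ω => min (X n ω) M) ℱ μ ∧
      ∀ n : ℕ, ∀ᵐ ω ∂μ,
        Set.indicator {ω' | 0 < min (X n ω') M ∧ min (X n ω') M < M}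
            (fun _ => δ / 2) ω ≤
          (μ[fun ω' => |min (X (n + 1) ω') M - min (X n ω') M| | ℱ n]) ω :=
  truncated_supermartingale_LBCAD_general ℱ X hsup δ hLBCAD M
end
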